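/- Let n ≥ 2 and m ≥ 2 be integers and let η, ν ∈ D^n_m. Then the number b_{ην} of lattice paths from η to ν using only positive unit steps and all of whose points lie in D^n_m equals Σ_{σ ∈ S_n} Σ_{j ∈ ℤ^n, j_1+⋯+j_n = 0} sign(σ) · T! / Π_{i=1}^{n} (m·j_i + ν_{σ(i)} − η_i)!, where T = Σ_{i=1}^{n} (ν_i − η_i), a summand is taken to be 0 whenever some m·j_i + ν_{σ(i)} − η_i is negative, and the sum over j has finitely many nonzero terms. -/

import Mathlib

open scoped Classical

/-- The (scaled) alcove `D^n_m = {x ∈ ℤ^n : x₁ > x₂ > ⋯ > xₙ > x₁ - m}`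
(coordinates indexed by `Fin n`). -/
def alcove (n m : ℕ) (hn : 0 < n) : Set (Fin n → ℤ) :=
  {x | StrictAnti x ∧ x ⟨0, hn⟩ - (m : ℤ) < x ⟨n - 1, Nat.sub_lt hn Nat.one_pos⟩}

/-- The boundary `H^n_m` : some two consecutive coordinates are equal, or the first
minus the last coordinate equals `m`. -/
def boundary (n m : ℕ) (hn : 0 < n) : Set (Fin n → ℤ) :=
  {x | (∃ i : Fin n, ∃ h : (i : ℕ) + 1 < n, x i = x ⟨(i : ℕ) + 1, h⟩) ∨
    x ⟨0, hn⟩ - x ⟨n - 1, Nat.sub_lt hn Nat.one_pos⟩ = (m : ℤ)}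

/-- The number of lattice paths from `η` to `ν` using only positive unit steps, all of
whose points lie in the alcove `D^n_m`; a path is encoded by its list of step
directions. -/
noncomputable def pathCount (n m : ℕ) (hn : 0 < n) (η ν : Fin n → ℤ) : ℕ :=
  Set.ncard {w : List (Fin n) |
    (∀ k ≤ w.length,
      η + ((w.take k).map (fun i => (Pi.single i 1 : Fin n → ℤ))).sum ∈ alcove n m hn) ∧
    η + (w.map (fun i => (Pi.single i 1 : Fin n → ℤ))).sum = ν}

namespace Stmt14Aux

/-- The real-valued summand of the reflection formula. -/
noncomputable def term (n m : ℕ) (η ν : Fin n → ℤ) (σ : Equiv.Perm (Fin n))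
    (j : Fin n → ℤ) : ℝ :=
  if (∑ i, j i) = 0 ∧ (∀ i, 0 ≤ (m : ℤ) * j i + ν (σ i) - η i) then
    ((Equiv.Perm.sign σ : ℤ) : ℝ) *
      ((∑ i, (ν i - η i)).toNat.factorial : ℝ) /
        ∏ i, (((m : ℤ) * j i + ν (σ i) - η i).toNat.factorial : ℝ)
  else 0

/-- The right-hand side of the reflection formula. -/
noncomputable def S (n m : ℕ) (η ν : Fin n → ℤ) : ℝ :=
  ∑ σ : Equiv.Perm (Fin n), ∑' j : Fin n → ℤ, term n m η ν σ j

/-- A bound for the support of `term`. -/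
def bnd (n : ℕ) (η ν : Fin n → ℤ) : ℤ :=
  |∑ i, (ν i - η i)| + ∑ i, (|ν i| + |η i|)

/-- A finite box containing the support of `term`. -/
noncomputable def box (n : ℕ) (η ν : Fin n → ℤ) : Finset (Fin n → ℤ) :=
  Fintype.piFinset fun _ => Finset.Icc (-(bnd n η ν)) (bnd n η ν)

theorem sum_apply_perm {n : ℕ} (ν : Fin n → ℤ) (σ : Equiv.Perm (Fin n)) :
    ∑ i, ν (σ i) = ∑ i, ν i :=
  Fintype.sum_equiv σ _ _ fun _ => rfl

theorem term_ne_zero_mem_box {n m : ℕ} (hm : 1 ≤ m) (η ν : Fin n → ℤ)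
    (σ : Equiv.Perm (Fin n)) (j : Fin n → ℤ) (h : term n m η ν σ j ≠ 0) :
    j ∈ box n η ν := by
  rw [term] at h
  by_cases hc : (∑ i, j i) = 0 ∧ (∀ i, 0 ≤ (m : ℤ) * j i + ν (σ i) - η i)
  swap
  · exact absurd (if_neg hc) h
  obtain ⟨hj, ha⟩ := hc
  have hsum : ∑ i, ((m : ℤ) * j i + ν (σ i) - η i) = ∑ i, (ν i - η i) := by
    simp only [Finset.sum_sub_distrib, Finset.sum_add_distrib, ← Finset.mul_sum, hj,
      sum_apply_perm ν σ]
    ring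
  simp only [box, Fintype.mem_piFinset, Finset.mem_Icc]
  intro i
  have h1 : (m : ℤ) * j i + ν (σ i) - η i ≤ ∑ i', (ν i' - η i') := by
    rw [← hsum]
    exact Finset.single_le_sum (fun i' _ => ha i') (Finset.mem_univ i)
  have h2 : 0 ≤ (m : ℤ) * j i + ν (σ i) - η i := ha i
  have l1 : |ν (σ i)| ≤ ∑ i', |ν i'| :=
    Finset.single_le_sum (f := fun i' => |ν i'|) (fun i' _ => abs_nonneg _) (Finset.mem_univ (σ i))
  have l2 : |η i| ≤ ∑ i', |η i'| :=
    Finset.single_le_sum (f := fun i' => |η i'|) (fun i' _ => abs_nonneg _) (Finset.mem_univ i)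
  have l3 : ∑ i', (|ν i'| + |η i'|) = (∑ i', |ν i'|) + ∑ i', |η i'| := Finset.sum_add_distrib
  have hb1 : (m : ℤ) * j i ≤ bnd n η ν := by
    unfold bnd
    have := le_abs_self (∑ i', (ν i' - η i'))
    have := neg_abs_le (ν (σ i))
    have := le_abs_self (η i)
    linarith
  have hb2 : -(bnd n η ν) ≤ (m : ℤ) * j i := by
    unfold bnd
    have := abs_nonneg (∑ i', (ν i' - η i'))
    have := le_abs_self (ν (σ i))
    have := neg_abs_le (η i)
    linarith
  have hbnd0 : 0 ≤ bnd n η ν := by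
    unfold bnd
    have := abs_nonneg (∑ i', (ν i' - η i'))
    have : 0 ≤ ∑ i', (|ν i'| + |η i'|) :=
      Finset.sum_nonneg fun i' _ => by positivity
    linarith [abs_nonneg (∑ i', (ν i' - η i'))]
  have hm' : (1:ℤ) ≤ (m:ℤ) := by exact_mod_cast hm
  constructor
  · rcases le_or_gt 0 (j i) with hcase | hcase
    · linarith
    · nlinarith
  · rcases le_or_gt 0 (j i) with hcase | hcase
    · nlinarith
    · linarith
theorem summable_term {n m : ℕ} (hm : 1 ≤ m) (η ν : Fin n → ℤ) (σ : Equiv.Perm (Fin n)) :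
    Summable (term n m η ν σ) :=
  summable_of_ne_finset_zero (s := box n η ν) fun j hj => by
    by_contra h; exact hj (term_ne_zero_mem_box hm η ν σ j h)

theorem tsum_term_eq_sum_box {n m : ℕ} (hm : 1 ≤ m) (η ν : Fin n → ℤ)
    (σ : Equiv.Perm (Fin n)) :
    ∑' j, term n m η ν σ j = ∑ j ∈ box n η ν, term n m η ν σ j :=
  tsum_eq_sum fun j hj => by
    by_contra h; exact hj (term_ne_zero_mem_box hm η ν σ j h)

theorem factorial_pascal {n : ℕ} (A : Fin n → ℕ) (t : ℕ) (hA : ∑ i, A i = t + 1) :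
    (∑ k, if 1 ≤ A k then (t.factorial : ℝ) /
        ∏ i, (((A i - if i = k then 1 else 0) : ℕ).factorial : ℝ) else 0)
      = ((t+1).factorial : ℝ) / ∏ i, ((A i).factorial : ℝ) := by
  have hprodpos : (0:ℝ) < ∏ i, ((A i).factorial : ℝ) :=
    Finset.prod_pos fun i _ => by positivity
  have key : ∀ k, (if 1 ≤ A k then (t.factorial : ℝ) /
        ∏ i, (((A i - if i = k then 1 else 0) : ℕ).factorial : ℝ) else 0)
      = (A k : ℝ) * ((t.factorial : ℝ) / ∏ i, ((A i).factorial : ℝ)) := by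
    intro k
    by_cases hk : 1 ≤ A k
    · rw [if_pos hk]
      have hsplit1 : ∏ i, (((A i - if i = k then 1 else 0) : ℕ).factorial : ℝ)
          = (((A k - 1) : ℕ).factorial : ℝ) *
              ∏ i ∈ Finset.univ.erase k, ((A i).factorial : ℝ) := by
        rw [← Finset.mul_prod_erase Finset.univ
          (fun i => (((A i - if i = k then 1 else 0) : ℕ).factorial : ℝ)) (Finset.mem_univ k)]
        simp only [if_pos rfl]
        congr 1
        exact Finset.prod_congr rfl fun i hi => by
          rw [if_neg (Finset.ne_of_mem_erase hi), Nat.sub_zero]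
      have hsplit2 : ∏ i, ((A i).factorial : ℝ)
          = ((A k).factorial : ℝ) * ∏ i ∈ Finset.univ.erase k, ((A i).factorial : ℝ) :=
        (Finset.mul_prod_erase Finset.univ _ (Finset.mem_univ k)).symm
      have hf : ((A k).factorial : ℝ) = (A k : ℝ) * (((A k - 1) : ℕ).factorial : ℝ) := by
        exact_mod_cast (Nat.mul_factorial_pred (by omega)).symm
      rw [hsplit1, hsplit2, hf]
      have h1 : (0:ℝ) < (((A k - 1) : ℕ).factorial : ℝ) := by positivity
      have h2 : (0:ℝ) < ∏ i ∈ Finset.univ.erase k, ((A i).factorial : ℝ) :=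
        Finset.prod_pos fun i _ => by positivity
      have h3 : (0:ℝ) < (A k : ℝ) := by exact_mod_cast hk
      field_simp
    · rw [if_neg hk]
      have : A k = 0 := by omega
      simp [this]
  rw [Finset.sum_congr rfl fun k _ => key k, ← Finset.sum_mul]
  have : (∑ k, (A k : ℝ)) = ((t:ℝ) + 1) := by
    rw [← Nat.cast_sum, hA]; push_cast; ring
  rw [this, Nat.factorial_succ]
  push_cast
  ring


theorem term_pascal {n m : ℕ} (η ν : Fin n → ℤ) (hT : 1 ≤ ∑ i, (ν i - η i))
    (σ : Equiv.Perm (Fin n)) (j : Fin n → ℤ) :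
    term n m η ν σ j = ∑ k, term n m (η + Pi.single k 1) ν σ j := by
  have happ : ∀ (k i : Fin n), (η + Pi.single k 1 : Fin n → ℤ) i = η i + if i = k then 1 else 0 := by
    intro k i
    simp [Pi.single_apply]
  by_cases hj : (∑ i, j i) = 0
  swap
  · rw [term, if_neg (by tauto)]
    refine (Finset.sum_eq_zero fun k _ => by rw [term, if_neg (by tauto)]).symm
  set a : Fin n → ℤ := fun i => (m : ℤ) * j i + ν (σ i) - η i with ha
  by_cases hpos : ∀ i, 0 ≤ a i
  swap
  · push_neg at hpos
    obtain ⟨i0, hi0⟩ := hpos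
    simp only [ha] at hi0
    rw [term, if_neg (by rintro ⟨-, h⟩; exact absurd (h i0) (by omega))]
    refine (Finset.sum_eq_zero fun k _ => ?_).symm
    rw [term, if_neg]
    rintro ⟨-, h⟩
    have h2 := h i0
    rw [happ] at h2
    split at h2 <;> omega
  -- main case
  have hTk : ∀ k : Fin n, ∑ i, (ν i - (η + Pi.single k 1 : Fin n → ℤ) i) = (∑ i, (ν i - η i)) - 1 := by
    intro k
    have : ∀ i, ν i - (η + Pi.single k 1 : Fin n → ℤ) i = (ν i - η i) - if i = k then 1 else 0 := by
      intro i; rw [happ]; ring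
    rw [Finset.sum_congr rfl fun i _ => this i, Finset.sum_sub_distrib]
    congr 1
    simp
  have hsum : ∑ i, a i = ∑ i, (ν i - η i) := by
    simp only [ha, Finset.sum_sub_distrib, Finset.sum_add_distrib, ← Finset.mul_sum, hj,
      sum_apply_perm ν σ]
    ring
  set A : Fin n → ℕ := fun i => (a i).toNat with hA
  set t : ℕ := (∑ i, (ν i - η i)).toNat - 1 with ht
  have htt : (∑ i, (ν i - η i)).toNat = t + 1 := by
    have : 1 ≤ (∑ i, (ν i - η i)).toNat := by omega
    omega
  have hAsum : ∑ i, A i = t + 1 := by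
    have : ((∑ i, A i : ℕ) : ℤ) = ∑ i, a i := by
      push_cast [hA]
      exact Finset.sum_congr rfl fun i _ => Int.toNat_of_nonneg (hpos i)
    omega
  have hterm_k : ∀ k, term n m (η + Pi.single k 1) ν σ j
      = ((Equiv.Perm.sign σ : ℤ) : ℝ) * (if 1 ≤ A k then (t.factorial : ℝ) /
          ∏ i, (((A i - if i = k then 1 else 0) : ℕ).factorial : ℝ) else 0) := by
    intro k
    rw [term]
    have hguard : ((∑ i, j i) = 0 ∧ ∀ i, 0 ≤ (m : ℤ) * j i + ν (σ i) - (η + Pi.single k 1 : Fin n → ℤ) i)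
        ↔ 1 ≤ A k := by
      constructor
      · rintro ⟨-, h⟩
        have h2 := h k
        rw [happ, if_pos rfl] at h2
        show 1 ≤ ((m:ℤ) * j k + ν (σ k) - η k).toNat
        omega
      · intro hk
        refine ⟨hj, fun i => ?_⟩
        rw [happ]
        have h1 : 0 ≤ (m:ℤ) * j i + ν (σ i) - η i := hpos i
        have hk' : 1 ≤ ((m:ℤ) * j k + ν (σ k) - η k).toNat := hk
        rcases eq_or_ne i k with rfl | hne
        · rw [if_pos rfl]; omega
        · rw [if_neg hne]; omega
    by_cases hk : 1 ≤ A k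
    · rw [if_pos (hguard.mpr hk), if_pos hk, hTk k]
      have h1 : ((∑ i, (ν i - η i)) - 1).toNat = t := by omega
      rw [h1]
      have h2 : ∀ i, ((m : ℤ) * j i + ν (σ i) - (η + Pi.single k 1 : Fin n → ℤ) i).toNat
          = A i - if i = k then 1 else 0 := by
        intro i
        rw [happ]
        have h4 : 0 ≤ (m:ℤ) * j i + ν (σ i) - η i := hpos i
        show ((m:ℤ) * j i + ν (σ i) - (η i + if i = k then 1 else 0)).toNat
          = ((m:ℤ) * j i + ν (σ i) - η i).toNat - if i = k then 1 else 0
        have hk' : 1 ≤ ((m:ℤ) * j k + ν (σ k) - η k).toNat := hk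
        rcases eq_or_ne i k with rfl | hne
        · rw [if_pos rfl, if_pos rfl]; omega
        · rw [if_neg hne, if_neg hne]; omega
      rw [Finset.prod_congr rfl fun i _ => by rw [h2 i]]
      ring
    · rw [if_neg (fun h => hk (hguard.mp h)), if_neg hk, mul_zero]
  rw [Finset.sum_congr rfl fun k _ => hterm_k k, ← Finset.mul_sum,
    factorial_pascal A t hAsum, term, if_pos ⟨hj, hpos⟩, htt]
  have h3 : ∀ i, ((m : ℤ) * j i + ν (σ i) - η i).toNat = A i := fun i => rfl
  rw [Finset.prod_congr rfl fun i _ => by rw [h3 i]]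
  ring

theorem S_rec {n m : ℕ} (hm : 1 ≤ m) (η ν : Fin n → ℤ) (hT : 1 ≤ ∑ i, (ν i - η i)) :
    S n m η ν = ∑ k, S n m (η + Pi.single k 1) ν := by
  calc S n m η ν
      = ∑ σ : Equiv.Perm (Fin n), ∑ k, ∑' j, term n m (η + Pi.single k 1) ν σ j := by
        refine Finset.sum_congr rfl fun σ _ => ?_
        rw [tsum_congr (term_pascal η ν hT σ)]
        exact Summable.tsum_finsetSum fun k _ => summable_term hm _ ν σ
    _ = ∑ k, ∑ σ : Equiv.Perm (Fin n), ∑' j, term n m (η + Pi.single k 1) ν σ j :=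
        Finset.sum_comm
    _ = _ := rfl

theorem S_eq_zero_of_refl {n m : ℕ} (η ν : Fin n → ℤ) (s : Equiv.Perm (Fin n))
    (hs : Equiv.Perm.sign s = -1) (d : Fin n → ℤ)
    (hd : ∀ i, (m : ℤ) * d i = η i - η (s i)) (hdsum : ∑ i, d i = 0) :
    S n m η ν = 0 := by
  have key : ∀ (σ : Equiv.Perm (Fin n)) (j : Fin n → ℤ),
      term n m η ν (σ * s) (fun i => j (s i) + d i) = - term n m η ν σ j := by
    intro σ j
    rw [term, term]
    have hsum : ∑ i, (j (s i) + d i) = ∑ i, j i := by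
      rw [Finset.sum_add_distrib, hdsum, add_zero]
      exact Fintype.sum_equiv s _ _ fun _ => rfl
    have hcoef : ∀ i, (m:ℤ) * (j (s i) + d i) + ν ((σ * s) i) - η i
        = (m:ℤ) * j (s i) + ν (σ (s i)) - η (s i) := by
      intro i
      rw [Equiv.Perm.mul_apply]
      linear_combination hd i
    have hguard : ((∑ i, (j (s i) + d i)) = 0 ∧
          ∀ i, 0 ≤ (m:ℤ) * (j (s i) + d i) + ν ((σ * s) i) - η i)
        ↔ ((∑ i, j i) = 0 ∧ ∀ i, 0 ≤ (m:ℤ) * j i + ν (σ i) - η i) := by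
      rw [hsum]
      refine and_congr_right fun _ => ?_
      constructor
      · intro h i
        have h2 := h (s.symm i)
        rw [hcoef] at h2
        simpa using h2
      · intro h i
        rw [hcoef]
        exact h (s i)
    by_cases hg : (∑ i, j i) = 0 ∧ ∀ i, 0 ≤ (m:ℤ) * j i + ν (σ i) - η i
    · rw [if_pos (hguard.mpr hg), if_pos hg]
      have hsgn : ((Equiv.Perm.sign (σ * s) : ℤ) : ℝ) = -((Equiv.Perm.sign σ : ℤ) : ℝ) := by
        rw [Equiv.Perm.sign_mul, hs]
        push_cast
        ring
      have hprod : ∏ i, (((m:ℤ) * (j (s i) + d i) + ν ((σ * s) i) - η i).toNat.factorial : ℝ)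
          = ∏ i, (((m:ℤ) * j i + ν (σ i) - η i).toNat.factorial : ℝ) := by
        rw [Finset.prod_congr rfl fun i _ => by rw [hcoef i]]
        exact Fintype.prod_equiv s _ _ fun _ => rfl
      rw [hsgn, hprod]
      ring
    · rw [if_neg (fun h => hg (hguard.mp h)), if_neg hg, neg_zero]
  have hA : ∀ σ : Equiv.Perm (Fin n),
      (∑' j, term n m η ν (σ * s) j) = - ∑' j, term n m η ν σ j := by
    intro σ
    calc ∑' j, term n m η ν (σ * s) j
        = ∑' j, term n m η ν (σ * s)
            (((Equiv.arrowCongr s.symm (Equiv.refl ℤ)).trans (Equiv.addRight d)) j) :=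
          (Equiv.tsum_eq _ _).symm
      _ = ∑' j, - term n m η ν σ j := tsum_congr fun j => by
            have he : ((Equiv.arrowCongr s.symm (Equiv.refl ℤ)).trans (Equiv.addRight d)) j
                = fun i => j (s i) + d i := by
              funext i
              simp [Equiv.arrowCongr, Equiv.addRight]
            rw [he, key]
      _ = - ∑' j, term n m η ν σ j := tsum_neg
  have hS : S n m η ν = - S n m η ν := by
    conv_lhs => rw [S]
    rw [show (∑ σ : Equiv.Perm (Fin n), ∑' j, term n m η ν σ j)
        = ∑ σ : Equiv.Perm (Fin n), ∑' j, term n m η ν (σ * s) j from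
      (Fintype.sum_equiv (Equiv.mulRight s)
        (fun σ => ∑' j, term n m η ν (σ * s) j) _ fun σ => rfl).symm]
    rw [Finset.sum_congr rfl fun σ _ => hA σ, Finset.sum_neg_distrib]
    rfl
  linarith

theorem S_eq_zero_of_boundary {n m : ℕ} (hn : 0 < n) (hn2 : 2 ≤ n) (η ν : Fin n → ℤ)
    (hb : η ∈ boundary n m hn) : S n m η ν = 0 := by
  rcases hb with ⟨i, h, heq⟩ | heq
  · have hne : i ≠ (⟨(i : ℕ) + 1, h⟩ : Fin n) := by
      intro hc
      have := congrArg Fin.val hc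
      simp only at this
      omega
    refine S_eq_zero_of_refl η ν (Equiv.swap i ⟨(i : ℕ) + 1, h⟩)
      (Equiv.Perm.sign_swap hne) 0 (fun i'' => ?_) (by simp)
    simp only [Pi.zero_apply, mul_zero]
    rcases eq_or_ne i'' i with rfl | h1
    · rw [Equiv.swap_apply_left]
      omega
    rcases eq_or_ne i'' (⟨(i : ℕ) + 1, h⟩ : Fin n) with rfl | h2
    · rw [Equiv.swap_apply_right]
      omega
    · rw [Equiv.swap_apply_of_ne_of_ne h1 h2]
      ring
  · have hne : (⟨0, hn⟩ : Fin n) ≠ (⟨n - 1, Nat.sub_lt hn Nat.one_pos⟩ : Fin n) := by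
      intro hc
      have := congrArg Fin.val hc
      simp only at this
      omega
    refine S_eq_zero_of_refl η ν (Equiv.swap ⟨0, hn⟩ ⟨n - 1, Nat.sub_lt hn Nat.one_pos⟩)
      (Equiv.Perm.sign_swap hne)
      (Pi.single ⟨0, hn⟩ 1 - Pi.single ⟨n - 1, Nat.sub_lt hn Nat.one_pos⟩ 1)
      (fun i => ?_) ?_
    · simp only [Pi.sub_apply, Pi.single_apply]
      rcases eq_or_ne i (⟨0, hn⟩ : Fin n) with rfl | h1
      · rw [Equiv.swap_apply_left, if_pos rfl, if_neg hne]
        omega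
      rcases eq_or_ne i (⟨n - 1, Nat.sub_lt hn Nat.one_pos⟩ : Fin n) with rfl | h2
      · rw [Equiv.swap_apply_right, if_neg (Ne.symm hne), if_pos rfl]
        omega
      · rw [Equiv.swap_apply_of_ne_of_ne h1 h2, if_neg h1, if_neg h2]
        ring
    · simp [Pi.sub_apply, Finset.sum_sub_distrib, Pi.single_apply, Finset.sum_ite_eq']

theorem alcove_diff_lt {n m : ℕ} (hn : 0 < n) {x : Fin n → ℤ} (hx : x ∈ alcove n m hn)
    (i i' : Fin n) : x i - x i' < m := by
  obtain ⟨hanti, hlt⟩ := hx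
  have h1 : x i ≤ x ⟨0, hn⟩ := hanti.antitone (by simp [Fin.le_def])
  have h2 : x ⟨n - 1, Nat.sub_lt hn Nat.one_pos⟩ ≤ x i' := by
    refine hanti.antitone ?_
    rw [Fin.le_def]
    have := i'.isLt
    simp only
    omega
  linarith

theorem strictMono_le_apply {n : ℕ} (f : Fin n → Fin n) (h : StrictMono f) (i : Fin n) :
    i ≤ f i := by
  suffices hk : ∀ k : ℕ, ∀ i : Fin n, i.val = k → k ≤ (f i).val by
    rw [Fin.le_def]
    exact hk i.val i rfl
  intro k
  induction k with
  | zero => intro i _; exact Nat.zero_le _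
  | succ k ih =>
    intro i hi
    have hk : k < n := by have := i.isLt; omega
    have hlt : (⟨k, hk⟩ : Fin n) < i := by rw [Fin.lt_def]; simp; omega
    have h1 := h hlt
    have h2 := ih ⟨k, hk⟩ rfl
    rw [Fin.lt_def] at h1
    omega

theorem strictMono_perm_eq_one {n : ℕ} (σ : Equiv.Perm (Fin n)) (h : StrictMono σ) :
    σ = 1 := by
  have hsymm : StrictMono (σ.symm : Fin n → Fin n) := by
    intro a b hab
    by_contra hc
    push_neg at hc
    have := h.monotone hc
    simp only [Equiv.apply_symm_apply] at this
    exact absurd (lt_of_lt_of_le hab this) (lt_irrefl _)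
  ext i
  have h1 : i ≤ σ i := strictMono_le_apply _ h i
  have h2 : σ i ≤ σ.symm (σ i) := strictMono_le_apply _ hsymm (σ i)
  rw [Equiv.symm_apply_apply] at h2
  exact congrArg Fin.val (le_antisymm h2 h1)

theorem freeness {n m : ℕ} (hn : 0 < n) (hm : 1 ≤ m) {η ν : Fin n → ℤ}
    (hη : η ∈ alcove n m hn) (hν : ν ∈ alcove n m hn) (σ : Equiv.Perm (Fin n))
    (j : Fin n → ℤ) (hj : ∑ i, j i = 0) (h : ∀ i, (m : ℤ) * j i + ν (σ i) = η i) :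
    σ = 1 ∧ j = 0 := by
  haveI : Nonempty (Fin n) := ⟨⟨0, hn⟩⟩
  have hm0 : (0 : ℤ) < m := by exact_mod_cast hm
  have hpair : ∀ i i', j i - j i' ≤ 1 := by
    intro i i'
    have h1 : η i - η i' < m := alcove_diff_lt hn hη i i'
    have h2 : ν (σ i') - ν (σ i) < m := alcove_diff_lt hn hν (σ i') (σ i)
    have e : (m : ℤ) * (j i - j i') = (η i - η i') + (ν (σ i') - ν (σ i)) := by
      linear_combination (h i) - (h i')
    nlinarith
  obtain ⟨i₀, -, hmin⟩ := Finset.exists_min_image Finset.univ j Finset.univ_nonempty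
  have hmin' : ∀ i, j i₀ ≤ j i := fun i => hmin i (Finset.mem_univ i)
  set c : ℤ := j i₀ with hc
  set A : Finset (Fin n) := Finset.univ.filter (fun i => j i = c + 1) with hA
  have hsum : ∑ i, j i = n * c + A.card := by
    have e1 : ∀ i, j i = c + (if j i = c + 1 then 1 else 0) := by
      intro i
      have := hmin' i
      have := hpair i i₀
      split <;> omega
    rw [Finset.sum_congr rfl fun i _ => e1 i, Finset.sum_add_distrib,
      Finset.sum_const, Finset.card_univ, Fintype.card_fin, Finset.sum_boole]
    ring
  have hcard_le : A.card ≤ n := le_trans (Finset.card_filter_le _ _)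
    (by rw [Finset.card_univ, Fintype.card_fin])
  have hjzero : j = 0 := by
    rcases lt_trichotomy c 0 with hlt | heq | hgt
    · exfalso
      have hsub : A ⊆ Finset.univ.erase i₀ := by
        intro i hi
        rw [Finset.mem_erase]
        refine ⟨fun hc' => ?_, Finset.mem_univ i⟩
        subst hc'
        rw [hA, Finset.mem_filter] at hi
        omega
      have hcard2 : A.card ≤ n - 1 := by
        have := Finset.card_le_card hsub
        rwa [Finset.card_erase_of_mem (Finset.mem_univ i₀), Finset.card_univ,
          Fintype.card_fin] at this
      have hnc : (n : ℤ) * c ≤ -n := by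
        have : c ≤ -1 := by omega
        nlinarith [Int.natCast_pos.mpr hn]
      have : (A.card : ℤ) ≥ n := by omega
      have : (A.card : ℕ) ≥ n := by exact_mod_cast this
      omega
    · funext i
      have h1 := hmin' i
      have h2 : (A.card : ℤ) = 0 := by
        rw [heq] at hsum
        omega
      have h3 : A.card = 0 := by exact_mod_cast h2
      have h4 : i ∉ A := by
        rw [Finset.card_eq_zero] at h3
        simp [h3]
      rw [hA, Finset.mem_filter] at h4
      push_neg at h4
      have h5 := h4 (Finset.mem_univ i)
      have h6 := hpair i i₀
      show j i = 0
      omega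
    · exfalso
      have : (n : ℤ) * c ≥ n := by nlinarith [Int.natCast_pos.mpr hn]
      have : (0 : ℤ) < n := Int.natCast_pos.mpr hn
      omega
  subst hjzero
  refine ⟨?_, rfl⟩
  have hident : ∀ i, ν (σ i) = η i := by
    intro i
    have := h i
    simpa using this
  have hmono : StrictMono (σ : Fin n → Fin n) := by
    intro i i' hlt
    have h1 : η i' < η i := hη.1 hlt
    rw [← hident i, ← hident i'] at h1
    exact (StrictAnti.lt_iff_gt hν.1).mp h1
  exact strictMono_perm_eq_one σ hmono

theorem sum_a_eq {n m : ℕ} (η ν : Fin n → ℤ) (σ : Equiv.Perm (Fin n)) (j : Fin n → ℤ)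
    (hj : ∑ i, j i = 0) :
    ∑ i, ((m : ℤ) * j i + ν (σ i) - η i) = ∑ i, (ν i - η i) := by
  simp only [Finset.sum_sub_distrib, Finset.sum_add_distrib, ← Finset.mul_sum, hj,
    sum_apply_perm ν σ]
  ring

theorem S_T_neg {n m : ℕ} (η ν : Fin n → ℤ) (hT : ∑ i, (ν i - η i) < 0) :
    S n m η ν = 0 := by
  unfold S
  refine Finset.sum_eq_zero fun σ _ => ?_
  rw [show (∑' j, term n m η ν σ j) = ∑' j : Fin n → ℤ, (0:ℝ) from tsum_congr fun j => ?_,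
    tsum_zero]
  rw [term, if_neg]
  rintro ⟨hj, hpos⟩
  have h1 := sum_a_eq (m := m) η ν σ j hj
  have h2 : 0 ≤ ∑ i, ((m : ℤ) * j i + ν (σ i) - η i) :=
    Finset.sum_nonneg fun i _ => hpos i
  omega

theorem S_T_zero {n m : ℕ} (hn : 0 < n) (hm : 1 ≤ m) (η ν : Fin n → ℤ)
    (hη : η ∈ alcove n m hn) (hν : ν ∈ alcove n m hn) (hT : ∑ i, (ν i - η i) = 0) :
    S n m η ν = if ν = η then 1 else 0 := by
  have hpt : ∀ (σ : Equiv.Perm (Fin n)) (j : Fin n → ℤ),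
      term n m η ν σ j = if σ = 1 ∧ j = 0 ∧ ν = η then 1 else 0 := by
    intro σ j
    rw [term]
    by_cases hg : (∑ i, j i) = 0 ∧ (∀ i, 0 ≤ (m : ℤ) * j i + ν (σ i) - η i)
    · obtain ⟨hj, hpos⟩ := hg
      have h1 := sum_a_eq (m := m) η ν σ j hj
      have hzero : ∀ i ∈ Finset.univ, (m : ℤ) * j i + ν (σ i) - η i = 0 :=
        (Finset.sum_eq_zero_iff_of_nonneg fun i _ => hpos i).mp (by omega)
      have hfree := freeness hn hm hη hν σ j hj
        (fun i => by have := hzero i (Finset.mem_univ i); omega)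
      obtain ⟨hσ, hj0⟩ := hfree
      have hνη : ν = η := by
        funext i
        have := hzero i (Finset.mem_univ i)
        rw [hσ, hj0] at this
        simp only [Pi.zero_apply, mul_zero, zero_add, Equiv.Perm.coe_one, id_eq] at this
        omega
      rw [if_pos ⟨hj, hpos⟩, if_pos ⟨hσ, hj0, hνη⟩, hT]
      have hfacs : ∀ i, (((m : ℤ) * j i + ν (σ i) - η i).toNat.factorial : ℝ) = 1 := by
        intro i
        have := hzero i (Finset.mem_univ i)
        rw [this]
        norm_num
      rw [Finset.prod_congr rfl fun i _ => hfacs i, hσ]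
      simp
    · rw [if_neg hg, if_neg]
      rintro ⟨hσ, hj0, hνη⟩
      refine hg ⟨by rw [hj0]; simp, fun i => ?_⟩
      rw [hσ, hj0, hνη]
      simp
  unfold S
  rw [Finset.sum_congr rfl fun σ _ =>
    tsum_congr fun j : Fin n → ℤ => hpt σ j]
  have htsum : ∀ σ : Equiv.Perm (Fin n),
      (∑' j : Fin n → ℤ, if σ = 1 ∧ j = 0 ∧ ν = η then (1:ℝ) else 0)
        = if σ = 1 ∧ ν = η then 1 else 0 := by
    intro σ
    rw [tsum_eq_sum (s := {0}) (fun j hj => by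
      rw [if_neg]
      rintro ⟨-, hj0, -⟩
      exact hj (by rw [hj0]; exact Finset.mem_singleton_self 0))]
    rw [Finset.sum_singleton]
    by_cases hca : σ = 1 ∧ ν = η
    · rw [if_pos ⟨hca.1, rfl, hca.2⟩, if_pos hca]
    · rw [if_neg (fun hcc => hca ⟨hcc.1, hcc.2.2⟩), if_neg hca]
  rw [Finset.sum_congr rfl fun σ _ => htsum σ]
  by_cases hνη : ν = η
  · simp [hνη]
  · simp [hνη]

def pathSet (n m : ℕ) (hn : 0 < n) (η ν : Fin n → ℤ) : Set (List (Fin n)) :=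
  {w : List (Fin n) |
    (∀ k ≤ w.length,
      η + ((w.take k).map (fun i => (Pi.single i 1 : Fin n → ℤ))).sum ∈ alcove n m hn) ∧
    η + (w.map (fun i => (Pi.single i 1 : Fin n → ℤ))).sum = ν}

theorem pathCount_eq (n m : ℕ) (hn : 0 < n) (η ν : Fin n → ℤ) :
    pathCount n m hn η ν = (pathSet n m hn η ν).ncard := rfl

theorem steps_sum {n : ℕ} (w : List (Fin n)) :
    ∑ i, ((w.map (fun i => (Pi.single i 1 : Fin n → ℤ))).sum) i = w.length := by
  induction w with
  | nil => simp
  | cons a t ih =>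
    simp only [List.map_cons, List.sum_cons, Pi.add_apply, List.length_cons]
    rw [Finset.sum_add_distrib, ih]
    simp [Pi.single_apply, Finset.sum_ite_eq']
    ring

theorem length_of_mem_pathSet {n m : ℕ} {hn : 0 < n} {η ν : Fin n → ℤ} {w : List (Fin n)}
    (hw : w ∈ pathSet n m hn η ν) : (w.length : ℤ) = ∑ i, (ν i - η i) := by
  have hend := hw.2
  have : ∀ i, ν i - η i = ((w.map (fun i => (Pi.single i 1 : Fin n → ℤ))).sum) i := by
    intro i
    have := congrFun hend i
    simp only [Pi.add_apply] at this
    omega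
  rw [Finset.sum_congr rfl fun i _ => this i, steps_sum]

theorem pathSet_finite {n m : ℕ} (hn : 0 < n) (η ν : Fin n → ℤ) :
    (pathSet n m hn η ν).Finite := by
  refine Set.Finite.subset (List.finite_length_eq (α := Fin n)
    (n := (∑ i, (ν i - η i)).toNat)) fun w hw => ?_
  have := length_of_mem_pathSet hw
  simp only [Set.mem_setOf_eq]
  omega

theorem pathCount_T_neg {n m : ℕ} (hn : 0 < n) (η ν : Fin n → ℤ)
    (hT : ∑ i, (ν i - η i) < 0) : pathCount n m hn η ν = 0 := by
  rw [pathCount_eq]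
  convert Set.ncard_empty (List (Fin n))
  rw [Set.eq_empty_iff_forall_notMem]
  intro w hw
  have := length_of_mem_pathSet hw
  omega

theorem pathCount_T_zero {n m : ℕ} (hn : 0 < n) (η ν : Fin n → ℤ)
    (hη : η ∈ alcove n m hn) (hT : ∑ i, (ν i - η i) = 0) :
    pathCount n m hn η ν = if ν = η then 1 else 0 := by
  rw [pathCount_eq]
  by_cases hνη : ν = η
  · rw [if_pos hνη]
    have hseteq : pathSet n m hn η ν = {[]} := by
      ext w
      rw [Set.mem_singleton_iff]
      constructor
      · intro hw
        have hlen := length_of_mem_pathSet hw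
        exact List.length_eq_zero_iff.mp (by omega)
      · intro hw
        subst hw
        refine ⟨fun k hk => ?_, by simp [hνη]⟩
        have hk0 : k = 0 := by simpa using hk
        subst hk0
        simpa using hη
    rw [hseteq, Set.ncard_singleton]
  · rw [if_neg hνη]
    convert Set.ncard_empty (List (Fin n))
    rw [Set.eq_empty_iff_forall_notMem]
    intro w hw
    have h1 := length_of_mem_pathSet hw
    have h2 : w.length = 0 := by omega
    have h3 := hw.2
    rw [List.length_eq_zero_iff.mp h2] at h3
    simp only [List.map_nil, List.sum_nil, add_zero] at h3
    exact hνη h3.symm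

theorem pathCount_not_alcove {n m : ℕ} (hn : 0 < n) (η ν : Fin n → ℤ)
    (hη : η ∉ alcove n m hn) : pathCount n m hn η ν = 0 := by
  rw [pathCount_eq]
  convert Set.ncard_empty (List (Fin n))
  rw [Set.eq_empty_iff_forall_notMem]
  intro w hw
  have := hw.1 0 (Nat.zero_le _)
  simp only [List.take_zero, List.map_nil, List.sum_nil, add_zero] at this
  exact hη this

theorem cons_mem_pathSet_iff {n m : ℕ} (hn : 0 < n) (η ν : Fin n → ℤ)
    (hη : η ∈ alcove n m hn) (a : Fin n) (t : List (Fin n)) :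
    (a :: t) ∈ pathSet n m hn η ν ↔ t ∈ pathSet n m hn (η + Pi.single a 1) ν := by
  have hstep : ∀ x : Fin n → ℤ, η + ((Pi.single a 1 : Fin n → ℤ) + x)
      = (η + Pi.single a 1) + x := fun x => (add_assoc η _ x).symm
  constructor
  · rintro ⟨h1, h2⟩
    refine ⟨fun k hk => ?_, ?_⟩
    · have := h1 (k + 1) (by simpa using Nat.succ_le_succ hk)
      rw [List.take_succ_cons, List.map_cons, List.sum_cons, hstep] at this
      exact this
    · rw [List.map_cons, List.sum_cons, hstep] at h2
      exact h2
  · rintro ⟨h1, h2⟩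
    refine ⟨fun k hk => ?_, ?_⟩
    · match k with
      | 0 => simpa using hη
      | (k' + 1) =>
        rw [List.take_succ_cons, List.map_cons, List.sum_cons, hstep]
        exact h1 k' (by simpa using hk)
    · rw [List.map_cons, List.sum_cons, hstep]
      exact h2

theorem pathCount_rec {n m : ℕ} (hn : 0 < n) (η ν : Fin n → ℤ)
    (hη : η ∈ alcove n m hn) (hT : 1 ≤ ∑ i, (ν i - η i)) :
    pathCount n m hn η ν = ∑ k, pathCount n m hn (η + Pi.single k 1) ν := by
  have hfin := pathSet_finite (m := m) hn η ν
  have hfink : ∀ k : Fin n, (pathSet n m hn (η + Pi.single k 1) ν).Finite :=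
    fun k => pathSet_finite hn _ ν
  have hset : hfin.toFinset
      = Finset.univ.biUnion (fun k => ((hfink k).toFinset).image (List.cons k)) := by
    ext w
    simp only [Set.Finite.mem_toFinset, Finset.mem_biUnion, Finset.mem_univ, true_and,
      Finset.mem_image]
    constructor
    · intro hw
      match w with
      | [] =>
        have h0 := length_of_mem_pathSet hw
        simp only [List.length_nil, Nat.cast_zero] at h0
        omega
      | (a :: t) =>
        exact ⟨a, t, (cons_mem_pathSet_iff hn η ν hη a t).mp hw, rfl⟩
    · rintro ⟨k, t, ht, rfl⟩
      exact (cons_mem_pathSet_iff hn η ν hη k t).mpr ht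
  rw [pathCount_eq, Set.ncard_eq_toFinset_card _ hfin, hset, Finset.card_biUnion]
  · refine Finset.sum_congr rfl fun k _ => ?_
    rw [Finset.card_image_of_injective _ (fun x y hxy => (List.cons.injEq k x k y).mp hxy |>.2),
      pathCount_eq, Set.ncard_eq_toFinset_card _ (hfink k)]
  · intro k _ k' _ hkk'
    rw [Function.onFun, Finset.disjoint_left]
    intro w hw hw'
    rw [Finset.mem_image] at hw hw'
    obtain ⟨t, -, rfl⟩ := hw
    obtain ⟨t', -, ht'⟩ := hw'
    exact hkk' ((List.cons.injEq k' t' k t).mp ht').1.symm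

theorem strictAnti_of_adjacent {n : ℕ} (f : Fin n → ℤ)
    (h : ∀ (i : ℕ) (hi : i + 1 < n), f ⟨i + 1, hi⟩ < f ⟨i, by omega⟩) :
    StrictAnti f := by
  have key : ∀ (d : ℕ) (a b : Fin n), (a : ℕ) + d + 1 = (b : ℕ) → f b < f a := by
    intro d
    induction d with
    | zero =>
      intro a b hab
      have hb : (a : ℕ) + 1 < n := by have := b.isLt; omega
      have hbe : b = ⟨(a : ℕ) + 1, hb⟩ := by
        ext; simp; omega
      rw [hbe]
      exact h a hb
    | succ d ih =>
      intro a b hab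
      have hb' : (a : ℕ) + d + 1 < n := by have := b.isLt; omega
      have h1 : f b < f ⟨(a : ℕ) + d + 1, hb'⟩ := by
        have hb2 : ((a : ℕ) + d + 1) + 1 < n := by have := b.isLt; omega
        have : b = ⟨((a : ℕ) + d + 1) + 1, hb2⟩ := by ext; simp; omega
        rw [this]
        exact h _ hb2
      have h2 : f ⟨(a : ℕ) + d + 1, hb'⟩ < f a := ih a _ (by simp)
      exact lt_trans h1 h2
  intro a b hab
  rw [Fin.lt_def] at hab
  exact key ((b : ℕ) - (a : ℕ) - 1) a b (by omega)

theorem alcove_not_boundary {n m : ℕ} (hn : 0 < n) {x : Fin n → ℤ}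
    (hx : x ∈ alcove n m hn) : x ∉ boundary n m hn := by
  rintro (⟨i, h, heq⟩ | heq)
  · have hlt : i < (⟨(i : ℕ) + 1, h⟩ : Fin n) := by rw [Fin.lt_def]; simp
    have := hx.1 hlt
    omega
  · have := hx.2
    omega

theorem alcove_add_single {n m : ℕ} (hn : 0 < n) (hn2 : 2 ≤ n) {η : Fin n → ℤ}
    (hη : η ∈ alcove n m hn) (k : Fin n) :
    (η + Pi.single k 1) ∈ alcove n m hn ∨ (η + Pi.single k 1) ∈ boundary n m hn := by
  by_cases hbd : (η + Pi.single k 1) ∈ boundary n m hn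
  · exact Or.inr hbd
  left
  have happ : ∀ i : Fin n, (η + Pi.single k 1 : Fin n → ℤ) i
      = η i + if i = k then 1 else 0 := by
    intro i; simp [Pi.single_apply]
  rw [boundary, Set.mem_setOf_eq, not_or, not_exists] at hbd
  obtain ⟨hbd1, hbd2⟩ := hbd
  constructor
  · refine strictAnti_of_adjacent _ fun i hi => ?_
    have hlt : η ⟨i + 1, hi⟩ < η ⟨i, by omega⟩ := hη.1 (by rw [Fin.lt_def]; simp)
    have hne : (η + Pi.single k 1 : Fin n → ℤ) ⟨i, by omega⟩
        ≠ (η + Pi.single k 1 : Fin n → ℤ) ⟨i + 1, hi⟩ := by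
      intro hcc
      exact hbd1 ⟨i, by omega⟩ ⟨hi, hcc⟩
    rw [happ, happ] at hne ⊢
    have hii : (⟨i, by omega⟩ : Fin n) ≠ (⟨i + 1, hi⟩ : Fin n) := by
      intro hcc; have := congrArg Fin.val hcc; simp at this
    rcases eq_or_ne (⟨i, by omega⟩ : Fin n) k with h1 | h1 <;>
      rcases eq_or_ne (⟨i + 1, hi⟩ : Fin n) k with h2 | h2
    · exact absurd (h1.trans h2.symm) hii
    · rw [if_pos h1, if_neg h2] at hne ⊢
      omega
    · rw [if_neg h1, if_pos h2] at hne ⊢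
      omega
    · rw [if_neg h1, if_neg h2] at hne ⊢
      omega
  · have h0 : (⟨0, hn⟩ : Fin n) ≠ (⟨n - 1, Nat.sub_lt hn Nat.one_pos⟩ : Fin n) := by
      intro hcc; have := congrArg Fin.val hcc; simp at this; omega
    have hne := hbd2
    have hlt := hη.2
    rw [happ, happ] at hne ⊢
    rcases eq_or_ne (⟨0, hn⟩ : Fin n) k with h1 | h1 <;>
      rcases eq_or_ne (⟨n - 1, Nat.sub_lt hn Nat.one_pos⟩ : Fin n) k with h2 | h2
    · exact absurd (h1.trans h2.symm) h0
    · rw [if_pos h1, if_neg h2] at hne ⊢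
      omega
    · rw [if_neg h1, if_pos h2] at hne ⊢
      omega
    · rw [if_neg h1, if_neg h2] at hne ⊢
      omega

theorem main_aux {n m : ℕ} (hn : 0 < n) (hn2 : 2 ≤ n) (hm : 1 ≤ m) (N : ℕ) :
    ∀ η ν : Fin n → ℤ, η ∈ alcove n m hn → ν ∈ alcove n m hn →
      (∑ i, (ν i - η i)).toNat ≤ N →
      (pathCount n m hn η ν : ℝ) = S n m η ν := by
  induction N with
  | zero =>
    intro η ν hη hν hle
    rcases lt_trichotomy (∑ i, (ν i - η i)) 0 with hT | hT | hT
    · rw [pathCount_T_neg hn η ν hT, S_T_neg η ν hT, Nat.cast_zero]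
    · rw [pathCount_T_zero hn η ν hη hT, S_T_zero hn hm η ν hη hν hT]
      split <;> norm_num
    · omega
  | succ N ih =>
    intro η ν hη hν hle
    rcases lt_trichotomy (∑ i, (ν i - η i)) 0 with hT | hT | hT
    · rw [pathCount_T_neg hn η ν hT, S_T_neg η ν hT, Nat.cast_zero]
    · rw [pathCount_T_zero hn η ν hη hT, S_T_zero hn hm η ν hη hν hT]
      split <;> norm_num
    · have hT1 : 1 ≤ ∑ i, (ν i - η i) := hT
      rw [pathCount_rec hn η ν hη hT1, S_rec hm η ν hT1, Nat.cast_sum]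
      refine Finset.sum_congr rfl fun k _ => ?_
      rcases alcove_add_single hn hn2 hη k with hk | hk
      · refine ih (η + Pi.single k 1) ν hk hν ?_
        have hTk : ∑ i, (ν i - (η + Pi.single k 1 : Fin n → ℤ) i)
            = (∑ i, (ν i - η i)) - 1 := by
          have : ∀ i, ν i - (η + Pi.single k 1 : Fin n → ℤ) i
              = (ν i - η i) - if i = k then 1 else 0 := by
            intro i
            simp [Pi.single_apply]
            split <;> ring
          rw [Finset.sum_congr rfl fun i _ => this i, Finset.sum_sub_distrib]
          congr 1
          simp
        rw [hTk]
        omega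
      · rw [S_eq_zero_of_boundary hn hn2 _ ν hk,
          pathCount_not_alcove hn _ ν (fun hc => alcove_not_boundary hn hc hk),
          Nat.cast_zero]

end Stmt14Aux

/-- The number of lattice paths from `η` to `ν` using positive unit
steps and staying in the alcove `D^n_m` is given by the reflection (affine Weyl group)
formula of Filaseta/Grabiner. -/
theorem stmt_14 (n m : ℕ) (hn : 2 ≤ n) (hm : 2 ≤ m) (η ν : Fin n → ℤ)
    (hη : η ∈ alcove n m (by omega)) (hν : ν ∈ alcove n m (by omega)) :
    (pathCount n m (by omega) η ν : ℝ)
      = ∑ σ : Equiv.Perm (Fin n), ∑' j : Fin n → ℤ,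
          if (∑ i, j i) = 0 ∧ (∀ i, 0 ≤ (m : ℤ) * j i + ν (σ i) - η i) then
            ((Equiv.Perm.sign σ : ℤ) : ℝ) *
              ((∑ i, (ν i - η i)).toNat.factorial : ℝ) /
                ∏ i, (((m : ℤ) * j i + ν (σ i) - η i).toNat.factorial : ℝ)
          else 0 := by
  have h := Stmt14Aux.main_aux (n := n) (m := m) (by omega) hn (by omega)
    ((∑ i, (ν i - η i)).toNat) η ν hη hν le_rfl
  exact h.trans rfl
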